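/- (A Pareto optimal cut-off must be the latest possible one.) Suppose u is uniform with values A > B > C. For all integers m, m' with kmin < m < m' ≤ N, the expected utilities over T1 of the cut-off profiles with cut-offs m and m' satisfy EU_{T1}(cut-off m') − EU_{T1}(cut-off m) = (m' − m)·(A − B)/(kmax − kmin); in particular EU_{T1}(cut-off m') > EU_{T1}(cut-off m), so the cut-off profile with cut-off N has strictly greater expected utility over T1 than any cut-off profile with cut-off strictly between kmin and N. -/

import Mathlib

/-- The two actions: `c` (canteen) and `o` (office). -/
inductive Act : Type
  | c : Act
  | o : Act
deriving DecidableEq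

open Act

/-- The set of arrival pairs
`T = {(k, k+1) : kmin ≤ k ≤ kmax - 1} ∪ {(k, k-1) : kmin + 1 ≤ k ≤ kmax}`. -/
noncomputable def T (kmin kmax : ℤ) : Finset (ℤ × ℤ) :=
  ((Finset.Icc kmin (kmax - 1)).image (fun k => (k, k + 1))) ∪
  ((Finset.Icc (kmin + 1) kmax).image (fun k => (k, k - 1)))

/-- Subgame `T1 = {(t1,t2) ∈ T : t1 ≡ kmin (mod 2)}`. -/
noncomputable def T1 (kmin kmax : ℤ) : Finset (ℤ × ℤ) :=
  (T kmin kmax).filter (fun t => t.1 % 2 = kmin % 2)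

/-- Subgame `T2 = {(t1,t2) ∈ T : t2 ≡ kmin (mod 2)}`. -/
noncomputable def T2 (kmin kmax : ℤ) : Finset (ℤ × ℤ) :=
  (T kmin kmax).filter (fun t => t.2 % 2 = kmin % 2)

/-- The expected utility of profile `s` over a set `S` of arrival pairs:
`EU_S(s) = (1/|S|) · Σ_{(t1,t2) ∈ S} u_{(t1,t2)}(s_1(t1), s_2(t2))`. -/
noncomputable def EU (u : ℤ × ℤ → Act → Act → ℝ) (s : (ℤ → Act) × (ℤ → Act))
    (S : Finset (ℤ × ℤ)) : ℝ :=
  (∑ t ∈ S, u t (s.1 t.1) (s.2 t.2)) / S.card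

/-- `s` is Pareto optimal over `S` if no profile `s'` has `EU_S(s') > EU_S(s)`. -/
def ParetoOptimal (u : ℤ × ℤ → Act → Act → ℝ) (S : Finset (ℤ × ℤ))
    (s : (ℤ → Act) × (ℤ → Act)) : Prop :=
  ¬ ∃ s' : (ℤ → Act) × (ℤ → Act), EU u s' S > EU u s S

/-- `u` satisfies conditions (U1) and (U2) on the arrival pairs of `T`. -/
def SatisfiesU1U2 (kmin kmax N : ℤ) (u : ℤ × ℤ → Act → Act → ℝ) : Prop :=
  ∀ t ∈ T kmin kmax,
    (t.1 < N ∧ t.2 < N →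
      u t c c > u t o o ∧ u t o o > u t c o ∧ u t c o = u t o c) ∧
    (N ≤ t.1 ∨ N ≤ t.2 →
      u t o o > u t c o ∧ u t c o = u t o c ∧ u t o c = u t c c)

/-- `u` is uniform with values `A > B > C` (the order is assumed separately). -/
def Uniform (kmin kmax N : ℤ) (u : ℤ × ℤ → Act → Act → ℝ) (A B C : ℝ) : Prop :=
  ∀ t ∈ T kmin kmax,
    (t.1 < N ∧ t.2 < N →
      u t c c = A ∧ u t o o = B ∧ u t c o = C ∧ u t o c = C) ∧
    (N ≤ t.1 ∨ N ≤ t.2 →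
      u t o o = B ∧ u t c c = C ∧ u t c o = C ∧ u t o c = C)

/-- The cut-off strategy with cut-off `m`: canteen iff arriving strictly before `m`. -/
def cutoff (m : ℤ) : ℤ → Act := fun k => if k < m then c else o

/-- The all-office strategy. -/
def allOffice : ℤ → Act := fun _ => o

/-!
Every pair of `T1` consists of two consecutive arrival times, and each `j ∈ [kmin, kmax)` is the
smaller arrival time of exactly one of them, the order of the two players being fixed by the
parity of `j`. Under the cut-off profile with cut-off `m ≤ N` the pair `{j, j + 1}` pays `A` if
`j + 1 < m`, `C` if `j = m - 1` and `B` if `m ≤ j`, whence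
`EU_{T1} = ((m - 1 - kmin) A + C + (kmax - m) B) / (kmax - kmin)`, an affine function of `m` with
slope `(A - B) / (kmax - kmin)`.
-/

open Finset

def T1Pair (kmin j : ℤ) : ℤ × ℤ :=
  if j % 2 = kmin % 2 then (j, j + 1) else (j + 1, j)

lemma T1Pair_injective (kmin : ℤ) : Function.Injective (T1Pair kmin) := by
  intro i j h
  unfold T1Pair at h
  split_ifs at h <;> simp only [Prod.mk.injEq] at h <;> omega

lemma T1_eq_image_T1Pair (kmin kmax : ℤ) :
    T1 kmin kmax = (Ico kmin kmax).image (T1Pair kmin) := by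
  ext ⟨a, b⟩
  simp only [T1, T, T1Pair, mem_filter, mem_union, mem_image, mem_Icc, mem_Ico, Prod.mk.injEq]
  constructor
  · rintro ⟨⟨k, hk, rfl, rfl⟩ | ⟨k, hk, rfl, rfl⟩, hpar⟩
    · exact ⟨k, by omega, by rw [if_pos hpar]⟩
    · exact ⟨k - 1, by omega, by rw [if_neg (by omega)]; simp⟩
  · rintro ⟨j, hj, hab⟩
    split_ifs at hab with hpar <;> obtain ⟨rfl, rfl⟩ := hab
    · exact ⟨Or.inl ⟨a, by omega, rfl, rfl⟩, hpar⟩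
    · exact ⟨Or.inr ⟨b + 1, by omega, rfl, by simp⟩, by omega⟩

lemma sum_T1 {M : Type*} [AddCommMonoid M] (kmin kmax : ℤ) (g : ℤ × ℤ → M) :
    ∑ t ∈ T1 kmin kmax, g t = ∑ j ∈ Ico kmin kmax, g (T1Pair kmin j) := by
  rw [T1_eq_image_T1Pair, sum_image fun i _ j _ h => T1Pair_injective kmin h]

lemma card_T1 (kmin kmax : ℤ) : #(T1 kmin kmax) = (kmax - kmin).toNat := by
  rw [T1_eq_image_T1Pair, card_image_of_injective _ (T1Pair_injective kmin), Int.card_Ico]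

def cutoffPayoff (A B C : ℝ) (m j : ℤ) : ℝ :=
  if j + 1 < m then A else if j < m then C else B

lemma Uniform.apply_cutoff_T1Pair {kmin kmax N : ℤ} {u : ℤ × ℤ → Act → Act → ℝ}
    {A B C : ℝ} (hu : Uniform kmin kmax N u A B C) {m j : ℤ} (hmN : m ≤ N)
    (hj : j ∈ Ico kmin kmax) :
    u (T1Pair kmin j) (cutoff m (T1Pair kmin j).1) (cutoff m (T1Pair kmin j).2) =
      cutoffPayoff A B C m j := by
  have hT : T1Pair kmin j ∈ T kmin kmax :=
    (mem_filter.1 (T1_eq_image_T1Pair kmin kmax ▸ mem_image_of_mem _ hj)).1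
  have h := hu _ hT
  rw [mem_Ico] at hj
  unfold T1Pair at *
  unfold cutoffPayoff cutoff
  grind

lemma sum_Ico_cutoffPayoff (A B C : ℝ) {kmin kmax m : ℤ} (hm : kmin < m) (hmk : m ≤ kmax) :
    ∑ j ∈ Ico kmin kmax, cutoffPayoff A B C m j =
      ((m - 1 - kmin : ℤ) : ℝ) * A + C + ((kmax - m : ℤ) : ℝ) * B := by
  have hA : ∀ j ∈ Ico kmin (m - 1), cutoffPayoff A B C m j = A := fun j hj => by
    rw [mem_Ico] at hj
    simp only [cutoffPayoff, if_pos (by omega : j + 1 < m)]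
  have hB : ∀ j ∈ Ico m kmax, cutoffPayoff A B C m j = B := fun j hj => by
    rw [mem_Ico] at hj
    simp only [cutoffPayoff, if_neg (by omega : ¬j + 1 < m), if_neg (by omega : ¬j < m)]
  have hC : cutoffPayoff A B C m (m - 1) = C := by
    simp only [cutoffPayoff, if_neg (by omega : ¬m - 1 + 1 < m), if_pos (by omega : m - 1 < m)]
  rw [← Ico_union_Ico_eq_Ico (b := m) hm.le hmk, sum_union (Ico_disjoint_Ico_consecutive _ _ _),
    ← insert_Ico_sub_one_right_eq_Ico hm, sum_insert (by simp), sum_congr rfl hA,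
    sum_congr rfl hB, hC, sum_const, sum_const, nsmul_eq_mul, nsmul_eq_mul]
  have hcardA : (#(Ico kmin (m - 1)) : ℝ) = ((m - 1 - kmin : ℤ) : ℝ) := by
    exact_mod_cast Int.card_Ico_of_le _ _ (by omega)
  have hcardB : (#(Ico m kmax) : ℝ) = ((kmax - m : ℤ) : ℝ) := by
    exact_mod_cast Int.card_Ico_of_le _ _ hmk
  rw [hcardA, hcardB]
  ring

lemma EU_cutoff_T1 {kmin kmax N : ℤ} {u : ℤ × ℤ → Act → Act → ℝ} {A B C : ℝ}
    (hu : Uniform kmin kmax N u A B C) {m : ℤ} (hm : kmin < m) (hmN : m ≤ N) (hN : N ≤ kmax) :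
    EU u (cutoff m, cutoff m) (T1 kmin kmax) =
      (((m - 1 - kmin : ℤ) : ℝ) * A + C + ((kmax - m : ℤ) : ℝ) * B) /
        ((kmax - kmin : ℤ) : ℝ) := by
  rw [EU, card_T1, ← sum_Ico_cutoffPayoff A B C hm (hmN.trans hN), sum_T1]
  congr 1
  · exact sum_congr rfl fun j hj => hu.apply_cutoff_T1Pair hmN hj
  · norm_cast; omega

theorem stmt_10_general (kmin kmax N : ℤ) (h2 : N ≤ kmax)
    (A B C : ℝ) (hAB : A > B)
    (u : ℤ × ℤ → Act → Act → ℝ) (hu : Uniform kmin kmax N u A B C)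
    (m m' : ℤ) (hm1 : kmin < m) (hmm' : m < m') (hm'N : m' ≤ N) :
    (EU u (cutoff m', cutoff m') (T1 kmin kmax) -
       EU u (cutoff m, cutoff m) (T1 kmin kmax) =
      ((m' - m : ℤ) : ℝ) * (A - B) / ((kmax - kmin : ℤ) : ℝ)) ∧
    EU u (cutoff m', cutoff m') (T1 kmin kmax) >
      EU u (cutoff m, cutoff m) (T1 kmin kmax) := by
  have hdiff : EU u (cutoff m', cutoff m') (T1 kmin kmax) -
      EU u (cutoff m, cutoff m) (T1 kmin kmax) =
      ((m' - m : ℤ) : ℝ) * (A - B) / ((kmax - kmin : ℤ) : ℝ) := by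
    rw [EU_cutoff_T1 hu (hm1.trans hmm') hm'N h2, EU_cutoff_T1 hu hm1 (hmm'.le.trans hm'N) h2,
      ← sub_div]
    push_cast
    ring
  refine ⟨hdiff, sub_pos.1 ?_⟩
  rw [hdiff]
  have hmm'_pos : (0 : ℝ) < ((m' - m : ℤ) : ℝ) := by exact_mod_cast sub_pos.2 hmm'
  have hk_pos : (0 : ℝ) < ((kmax - kmin : ℤ) : ℝ) := by
    exact_mod_cast (by omega : (0 : ℤ) < kmax - kmin)
  exact div_pos (mul_pos hmm'_pos (sub_pos.2 hAB)) hk_pos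

/-- A Pareto optimal cut-off must be the latest possible one: for
`kmin < m < m' ≤ N`, the difference of expected utilities over `T1` is
`(m' - m)·(A - B)/(kmax - kmin) > 0`. -/
theorem stmt_10 (kmin kmax N : ℤ) (h1 : kmin < N) (h2 : N ≤ kmax)
    (A B C : ℝ) (hAB : A > B) (hBC : B > C)
    (u : ℤ × ℤ → Act → Act → ℝ) (hu : Uniform kmin kmax N u A B C)
    (m m' : ℤ) (hm1 : kmin < m) (hmm' : m < m') (hm'N : m' ≤ N) :
    (EU u (cutoff m', cutoff m') (T1 kmin kmax) -
       EU u (cutoff m, cutoff m) (T1 kmin kmax) =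
      ((m' - m : ℤ) : ℝ) * (A - B) / ((kmax - kmin : ℤ) : ℝ)) ∧
    EU u (cutoff m', cutoff m') (T1 kmin kmax) >
      EU u (cutoff m, cutoff m) (T1 kmin kmax) :=
  stmt_10_general kmin kmax N h2 A B C hAB u hu m m' hm1 hmm' hm'N
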